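/- arXiv:0804.4866 — 2 statements merged into one kernel-verified Lean document; each statement's English description precedes it below -/
import Mathlib

section
/- The single-user water-filling allocation is optimal: among all measurable P : Ω → [0,∞) with E[P(H)] ≤ p̄, the expectation E[log(1 + |H|²P(H))] is maximized by P*(H) = max(1/ν − 1/|H|², 0), where ν > 0 is chosen so that E[P*(H)] = p̄ (assuming |H|² > 0 a.s. and such ν exists). -/
open MeasureTheory Real

/-!
Weak duality for the Lagrangian. Since `log` is concave, the rate `log (1 + g p)` lies below its
tangent at the water-filling level `q = max (1/ν - 1/g) 0`, whose slope `g / (1 + g q)` is at most `ν`,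
with equality where `q > 0`. Hence pointwise `log (1 + g P) ≤ log (1 + g P*) + ν (P - P*)` for every
`P ≥ 0`, and integrating, `E log (1 + g P) ≤ E log (1 + g P*) + ν (E P - E P*) ≤ E log (1 + g P*)`.
-/

theorem Real.log_le_log_add_sub_div {x y : ℝ} (hx : 0 < x) (hy : 0 < y) :
    log x ≤ log y + (x - y) / y := by
  have h := log_le_sub_one_of_pos (div_pos hx hy)
  rw [log_div hx.ne' hy.ne'] at h
  rw [sub_div, div_self hy.ne']
  linarith

theorem Real.log_one_add_mul_le_tangent {g p q : ℝ} (hg : 0 ≤ g) (hp : 0 ≤ p) (hq : 0 ≤ q) :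
    log (1 + g * p) ≤ log (1 + g * q) + g / (1 + g * q) * (p - q) := by
  have h := log_le_log_add_sub_div (x := 1 + g * p) (y := 1 + g * q) (by positivity) (by positivity)
  convert h using 2
  ring

/-- The KKT conditions at the water-filling level `q`: the marginal rate `g / (1 + g q)` is at
most `ν`, with equality where `q > 0`. -/
theorem waterfilling_marginal_mul_sub_le {g ν p : ℝ} (hg : 0 < g) (hν : 0 < ν) (hp : 0 ≤ p) :
    g / (1 + g * max (1 / ν - 1 / g) 0) * (p - max (1 / ν - 1 / g) 0) ≤
      ν * (p - max (1 / ν - 1 / g) 0) := by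
  rcases le_or_gt (1 / ν - 1 / g) 0 with hoff | hon
  · have hgν : g ≤ ν := by
      rwa [sub_nonpos, one_div_le_one_div hν hg] at hoff
    rw [max_eq_right hoff]
    simpa using mul_le_mul_of_nonneg_right hgν hp
  · have hrate : g / (1 + g * (1 / ν - 1 / g)) = ν := by
      field_simp [hg.ne']
      ring
    rw [max_eq_left hon.le, hrate]

theorem log_one_add_mul_le_waterfilling {g ν p : ℝ} (hg : 0 < g) (hν : 0 < ν) (hp : 0 ≤ p) :
    log (1 + g * p) ≤
      log (1 + g * max (1 / ν - 1 / g) 0) + ν * (p - max (1 / ν - 1 / g) 0) :=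
  (log_one_add_mul_le_tangent hg.le hp (le_max_right _ _)).trans
    (add_le_add_right (waterfilling_marginal_mul_sub_le hg hν hp) _)

theorem integral_le_of_ae_le_add_mul_sub {Ω : Type*} [MeasurableSpace Ω] {μ : Measure Ω}
    {f g P Q : Ω → ℝ} {ν : ℝ} (hν : 0 ≤ ν) (hf : Integrable f μ) (hg : Integrable g μ)
    (hP : Integrable P μ) (hQ : Integrable Q μ) (hPQ : ∫ ω, P ω ∂μ ≤ ∫ ω, Q ω ∂μ)
    (hle : ∀ᵐ ω ∂μ, f ω ≤ g ω + ν * (P ω - Q ω)) :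
    ∫ ω, f ω ∂μ ≤ ∫ ω, g ω ∂μ := by
  have hcost : Integrable (fun ω => ν * (P ω - Q ω)) μ := (hP.sub hQ).const_mul ν
  calc ∫ ω, f ω ∂μ ≤ ∫ ω, (g ω + ν * (P ω - Q ω)) ∂μ := integral_mono_ae hf (hg.add hcost) hle
    _ = ∫ ω, g ω ∂μ + ν * (∫ ω, P ω ∂μ - ∫ ω, Q ω ∂μ) := by
      rw [integral_add hg hcost, integral_const_mul, integral_sub hP hQ]
    _ ≤ ∫ ω, g ω ∂μ := by
      have : ν * (∫ ω, P ω ∂μ - ∫ ω, Q ω ∂μ) ≤ 0 := mul_nonpos_of_nonneg_of_nonpos hν (by linarith)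
      linarith

theorem waterfilling_optimal_general {Ω : Type*} [MeasurableSpace Ω]
    (μ : Measure Ω)
    (H : Ω → ℂ) (pbar : ℝ) (ν : ℝ) (hν : 0 < ν)
    (hH : ∀ᵐ ω ∂μ, 0 < ‖H ω‖ ^ 2)
    (Pstar : Ω → ℝ)
    (hPstar : ∀ ω, Pstar ω = max (1 / ν - 1 / ‖H ω‖ ^ 2) 0)
    (hPstarInt : Integrable Pstar μ)
    (hPstarBudget : ∫ ω, Pstar ω ∂μ = pbar)
    (hPstarRate : Integrable (fun ω => Real.log (1 + ‖H ω‖ ^ 2 * Pstar ω)) μ) :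
    ∀ P : Ω → ℝ, (∀ ω, 0 ≤ P ω) → Integrable P μ → (∫ ω, P ω ∂μ) ≤ pbar →
      Integrable (fun ω => Real.log (1 + ‖H ω‖ ^ 2 * P ω)) μ →
      ∫ ω, Real.log (1 + ‖H ω‖ ^ 2 * P ω) ∂μ ≤
        ∫ ω, Real.log (1 + ‖H ω‖ ^ 2 * Pstar ω) ∂μ := by
  intro P hP hPInt hPBudget hPRate
  refine integral_le_of_ae_le_add_mul_sub hν.le hPRate hPstarRate hPInt hPstarInt
    (hPstarBudget ▸ hPBudget) ?_
  filter_upwards [hH] with ω hgain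
  rw [hPstar ω]
  exact log_one_add_mul_le_waterfilling hgain hν (hP ω)

theorem waterfilling_optimal {Ω : Type*} [MeasurableSpace Ω]
    (μ : Measure Ω) [IsProbabilityMeasure μ]
    (H : Ω → ℂ) (pbar : ℝ) (hpbar : 0 < pbar) (ν : ℝ) (hν : 0 < ν)
    (hH : ∀ᵐ ω ∂μ, 0 < ‖H ω‖ ^ 2)
    (Pstar : Ω → ℝ)
    (hPstar : ∀ ω, Pstar ω = max (1 / ν - 1 / ‖H ω‖ ^ 2) 0)
    (hPstarInt : Integrable Pstar μ)
    (hPstarBudget : ∫ ω, Pstar ω ∂μ = pbar)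
    (hPstarRate : Integrable (fun ω => Real.log (1 + ‖H ω‖ ^ 2 * Pstar ω)) μ) :
    ∀ P : Ω → ℝ, (∀ ω, 0 ≤ P ω) → Integrable P μ → (∫ ω, P ω ∂μ) ≤ pbar →
      Integrable (fun ω => Real.log (1 + ‖H ω‖ ^ 2 * P ω)) μ →
      ∫ ω, Real.log (1 + ‖H ω‖ ^ 2 * P ω) ∂μ ≤
        ∫ ω, Real.log (1 + ‖H ω‖ ^ 2 * Pstar ω) ∂μ :=
  waterfilling_optimal_general μ H pbar ν hν hH Pstar hPstar hPstarInt hPstarBudget hPstarRate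
end

section
/- Opportunistic scheduling optimality for the two-user sum-rate: suppose P* = (P₁*, P₂*) is a measurable allocation with E[Pₖ*] = p̄ₖ and, for a.e. fading state ω, gₖ(ω)/(1+g₁(ω)P₁*(ω)+g₂(ω)P₂*(ω)) ≤ νₖ with equality whenever Pₖ*(ω) > 0 (k = 1,2), for some ν₁, ν₂ > 0. Then P* maximizes E[log(1+g₁P₁+g₂P₂)] over all measurable (P₁,P₂) ≥ 0 with E[Pₖ] ≤ p̄ₖ. -/
open MeasureTheory Real

theorem kkt_sufficiency_two_user_sum_rate {Ω : Type*} [MeasurableSpace Ω]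
    (μ : Measure Ω) [IsProbabilityMeasure μ]
    (g₁ g₂ : Ω → ℝ) (hg₁ : ∀ ω, 0 ≤ g₁ ω) (hg₂ : ∀ ω, 0 ≤ g₂ ω)
    (ν₁ ν₂ pbar₁ pbar₂ : ℝ) (hν₁ : 0 < ν₁) (hν₂ : 0 < ν₂) (hpbar₁ : 0 < pbar₁) (hpbar₂ : 0 < pbar₂)
    (P₁s P₂s : Ω → ℝ) (hP₁sNN : ∀ ω, 0 ≤ P₁s ω) (hP₂sNN : ∀ ω, 0 ≤ P₂s ω)
    (hKKT₁ : ∀ᵐ ω ∂μ, g₁ ω / (1 + g₁ ω * P₁s ω + g₂ ω * P₂s ω) ≤ ν₁ ∧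
      (0 < P₁s ω → g₁ ω / (1 + g₁ ω * P₁s ω + g₂ ω * P₂s ω) = ν₁))
    (hKKT₂ : ∀ᵐ ω ∂μ, g₂ ω / (1 + g₁ ω * P₁s ω + g₂ ω * P₂s ω) ≤ ν₂ ∧
      (0 < P₂s ω → g₂ ω / (1 + g₁ ω * P₁s ω + g₂ ω * P₂s ω) = ν₂))
    (hP₁sInt : Integrable P₁s μ) (hP₂sInt : Integrable P₂s μ)
    (hBudget₁ : ∫ ω, P₁s ω ∂μ = pbar₁) (hBudget₂ : ∫ ω, P₂s ω ∂μ = pbar₂)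
    (hRateS : Integrable (fun ω => Real.log (1 + g₁ ω * P₁s ω + g₂ ω * P₂s ω)) μ) :
    ∀ P₁ P₂ : Ω → ℝ, (∀ ω, 0 ≤ P₁ ω) → (∀ ω, 0 ≤ P₂ ω) →
      Integrable P₁ μ → Integrable P₂ μ →
      (∫ ω, P₁ ω ∂μ) ≤ pbar₁ → (∫ ω, P₂ ω ∂μ) ≤ pbar₂ →
      Integrable (fun ω => Real.log (1 + g₁ ω * P₁ ω + g₂ ω * P₂ ω)) μ →
      ∫ ω, Real.log (1 + g₁ ω * P₁ ω + g₂ ω * P₂ ω) ∂μ ≤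
        ∫ ω, Real.log (1 + g₁ ω * P₁s ω + g₂ ω * P₂s ω) ∂μ := by
  intro P₁ P₂ hP₁NN hP₂NN hP₁Int hP₂Int hB₁ hB₂ hRate
  have key : ∀ᵐ ω ∂μ,
      Real.log (1 + g₁ ω * P₁ ω + g₂ ω * P₂ ω)
        - Real.log (1 + g₁ ω * P₁s ω + g₂ ω * P₂s ω)
      ≤ ν₁ * (P₁ ω - P₁s ω) + ν₂ * (P₂ ω - P₂s ω) := by
    filter_upwards [hKKT₁, hKKT₂] with ω h1 h2
    obtain ⟨h1le, h1eq⟩ := h1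
    obtain ⟨h2le, h2eq⟩ := h2
    have m1s := mul_nonneg (hg₁ ω) (hP₁sNN ω)
    have m2s := mul_nonneg (hg₂ ω) (hP₂sNN ω)
    have m1 := mul_nonneg (hg₁ ω) (hP₁NN ω)
    have m2 := mul_nonneg (hg₂ ω) (hP₂NN ω)
    set Ss := 1 + g₁ ω * P₁s ω + g₂ ω * P₂s ω with hSsdef
    set S := 1 + g₁ ω * P₁ ω + g₂ ω * P₂ ω with hSdef
    have hSs : (0:ℝ) < Ss := by simp only [hSsdef]; linarith
    have hS : (0:ℝ) < S := by simp only [hSdef]; linarith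
    have hlog : Real.log S - Real.log Ss ≤ (S - Ss) / Ss := by
      have h := Real.log_le_sub_one_of_pos (div_pos hS hSs)
      rw [Real.log_div hS.ne' hSs.ne'] at h
      have : S / Ss - 1 = (S - Ss) / Ss := by field_simp
      linarith [this ▸ h]
    have hg1le : g₁ ω ≤ ν₁ * Ss := (div_le_iff₀ hSs).mp h1le
    have hg2le : g₂ ω ≤ ν₂ * Ss := (div_le_iff₀ hSs).mp h2le
    have e1 : g₁ ω * P₁s ω = ν₁ * Ss * P₁s ω := by
      rcases (hP₁sNN ω).eq_or_lt with h | h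
      · rw [← h]; ring
      · have := h1eq h
        have : g₁ ω = ν₁ * Ss := by
          field_simp at this; linarith [this]
        rw [this]
    have e2 : g₂ ω * P₂s ω = ν₂ * Ss * P₂s ω := by
      rcases (hP₂sNN ω).eq_or_lt with h | h
      · rw [← h]; ring
      · have := h2eq h
        have : g₂ ω = ν₂ * Ss := by
          field_simp at this; linarith [this]
        rw [this]
    have hdiv : (S - Ss) / Ss ≤ ν₁ * (P₁ ω - P₁s ω) + ν₂ * (P₂ ω - P₂s ω) := by
      rw [div_le_iff₀ hSs]
      have t1 : g₁ ω * P₁ ω ≤ ν₁ * Ss * P₁ ω :=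
        mul_le_mul_of_nonneg_right hg1le (hP₁NN ω)
      have t2 : g₂ ω * P₂ ω ≤ ν₂ * Ss * P₂ ω :=
        mul_le_mul_of_nonneg_right hg2le (hP₂NN ω)
      have hSdiff : S - Ss = g₁ ω * P₁ ω + g₂ ω * P₂ ω - g₁ ω * P₁s ω - g₂ ω * P₂s ω := by
        simp only [hSdef, hSsdef]; ring
      rw [hSdiff]
      nlinarith [t1, t2, e1, e2]
    linarith
  have hIntL : Integrable (fun ω => Real.log (1 + g₁ ω * P₁ ω + g₂ ω * P₂ ω)
      - Real.log (1 + g₁ ω * P₁s ω + g₂ ω * P₂s ω)) μ := hRate.sub hRateS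
  have hIntR : Integrable (fun ω => ν₁ * (P₁ ω - P₁s ω) + ν₂ * (P₂ ω - P₂s ω)) μ :=
    ((hP₁Int.sub hP₁sInt).const_mul ν₁).add ((hP₂Int.sub hP₂sInt).const_mul ν₂)
  have hmono := integral_mono_ae hIntL hIntR key
  rw [integral_sub hRate hRateS] at hmono
  have hR : ∫ ω, (ν₁ * (P₁ ω - P₁s ω) + ν₂ * (P₂ ω - P₂s ω)) ∂μ
      = ν₁ * ((∫ ω, P₁ ω ∂μ) - pbar₁) + ν₂ * ((∫ ω, P₂ ω ∂μ) - pbar₂) := by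
    have i1 : Integrable (fun ω => ν₁ * (P₁ ω - P₁s ω)) μ := (hP₁Int.sub hP₁sInt).const_mul ν₁
    have i2 : Integrable (fun ω => ν₂ * (P₂ ω - P₂s ω)) μ := (hP₂Int.sub hP₂sInt).const_mul ν₂
    rw [integral_add i1 i2, integral_const_mul, integral_const_mul,
      integral_sub hP₁Int hP₁sInt, integral_sub hP₂Int hP₂sInt, hBudget₁, hBudget₂]
  rw [hR] at hmono
  nlinarith [hmono, mul_nonneg hν₁.le (sub_nonneg.mpr hB₁), mul_nonneg hν₂.le (sub_nonneg.mpr hB₂)]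
end
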